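/- For 1 ≤ p < ∞ and any Banach space Y, the thickness constant of Z = ℓ_p ⊕_p Y equals 2^{1/p}. -/

import Mathlib

/-!
For the sign `s = ±1` of `y₀`, `‖y - s e₀‖^p = ‖y‖^p - |y₀|^p + |y₀ - s|^p ≤ 1 + 1`, so the two
balls of radius `2^{1/p}` around `±e₀` cover the unit ball. Conversely, the coordinates of a unit
vector `x` tend to `0`, so `‖e_n - x‖^p = 1 - |x_n|^p + |x_n - 1|^p → 2`: finitely many balls of
radius below `2^{1/p}` centred on the sphere all miss `e_n` for large `n`.
-/

open scoped ENNReal NNReal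

/-- The thickness constant `T(X)`: the infimum of `ε > 0` such that finitely many closed
`ε`-balls centered at unit vectors cover the closed unit ball of `X`. -/
noncomputable def thickness (X : Type*) [NormedAddCommGroup X] : ℝ :=
  sInf {ε : ℝ | 0 < ε ∧ ∃ F : Finset X, (∀ x ∈ F, ‖x‖ = 1) ∧
    ∀ y : X, ‖y‖ ≤ 1 → ∃ x ∈ F, ‖y - x‖ ≤ ε}

/-- Whitley's thickness constant `T_W(X)`: the infimum of `ε > 0` such that there is a finite
`ε`-net consisting of unit vectors for the unit sphere of `X`. -/
noncomputable def whitleyThickness (X : Type*) [NormedAddCommGroup X] : ℝ :=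
  sInf {ε : ℝ | 0 < ε ∧ ∃ F : Finset X, (∀ x ∈ F, ‖x‖ = 1) ∧
    ∀ y : X, ‖y‖ = 1 → ∃ x ∈ F, ‖y - x‖ ≤ ε}

open Filter Topology WithLp

section Thickness

variable {X : Type*} [NormedAddCommGroup X]

def IsUnitCenteredCover (F : Finset X) (ε : ℝ) : Prop :=
  (∀ x ∈ F, ‖x‖ = 1) ∧ ∀ y : X, ‖y‖ ≤ 1 → ∃ x ∈ F, ‖y - x‖ ≤ ε

theorem IsUnitCenteredCover.le_of_tendsto {F : Finset X} {ε c : ℝ} (hF : IsUnitCenteredCover F ε)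
    {ι : Type*} {l : Filter ι} [l.NeBot] {u : ι → X} (hu : ∀ i, ‖u i‖ ≤ 1)
    (hlim : ∀ x : X, ‖x‖ = 1 → Tendsto (fun i => ‖u i - x‖) l (𝓝 c)) :
    c ≤ ε := by
  by_contra! hεc
  have hfar : ∀ᶠ i in l, ∀ x ∈ F, ε < ‖u i - x‖ :=
    (eventually_all_finset F).2 fun x hx => (hlim x (hF.1 x hx)).eventually_const_lt hεc
  obtain ⟨i, hi⟩ := hfar.exists
  obtain ⟨x, hxF, hx⟩ := hF.2 (u i) (hu i)
  exact (hi x hxF).not_ge hx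

theorem thickness_eq_of_tendsto {F : Finset X} {c : ℝ} (hc : 0 < c) (hF : IsUnitCenteredCover F c)
    {ι : Type*} {l : Filter ι} [l.NeBot] {u : ι → X} (hu : ∀ i, ‖u i‖ ≤ 1)
    (hlim : ∀ x : X, ‖x‖ = 1 → Tendsto (fun i => ‖u i - x‖) l (𝓝 c)) :
    thickness X = c :=
  IsLeast.csInf_eq ⟨⟨hc, F, hF⟩, fun _ ⟨_, _, hF'⟩ => IsUnitCenteredCover.le_of_tendsto hF' hu hlim⟩

end Thickness

namespace lp

variable {α : Type*} {E : α → Type*} [∀ i, NormedAddCommGroup (E i)] {p : ℝ≥0∞}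

theorem tendsto_norm_apply_cofinite_zero [Fact (1 ≤ p)] (hp : p ≠ ⊤) (f : lp E p) :
    Tendsto (fun i => ‖f i‖) cofinite (𝓝 0) := by
  classical
  have hp₀ : 0 < p := zero_lt_one.trans_le Fact.out
  simpa [lp.norm_single hp₀] using (lp.hasSum_single hp f).summable.tendsto_cofinite_zero.norm

theorem norm_sub_single_rpow [DecidableEq α] (hp : 0 < p.toReal) (f : lp E p) (i : α) (c : E i) :
    ‖f - lp.single p i c‖ ^ p.toReal
      = ‖f‖ ^ p.toReal - ‖f i‖ ^ p.toReal + ‖f i - c‖ ^ p.toReal := by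
  have hdiff : HasSum (fun j => ‖(f - lp.single p i c) j‖ ^ p.toReal - ‖f j‖ ^ p.toReal)
      (‖f i - c‖ ^ p.toReal - ‖f i‖ ^ p.toReal) := by
    convert hasSum_single (f := fun j => ‖(f - lp.single p i c) j‖ ^ p.toReal - ‖f j‖ ^ p.toReal)
      i fun j hj => ?_ using 1
    · simp
    · simp [Pi.single_eq_of_ne hj]
  linarith [((lp.hasSum_norm hp _).sub (lp.hasSum_norm hp f)).unique hdiff]

end lp

theorem WithLp.prod_norm_rpow_eq_add {p : ℝ≥0∞} {α β : Type*} [NormedAddCommGroup α]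
    [NormedAddCommGroup β] (hp : 0 < p.toReal) (z : WithLp p (α × β)) :
    ‖z‖ ^ p.toReal = ‖z.fst‖ ^ p.toReal + ‖z.snd‖ ^ p.toReal := by
  rw [prod_norm_eq_add hp, one_div, Real.rpow_inv_rpow (by positivity) hp.ne']

section LpSum

variable {p : ℝ≥0∞} [Fact (1 ≤ p)] {Y : Type*} [NormedAddCommGroup Y]

theorem norm_sub_toLp_single_rpow {α : Type*} [DecidableEq α] {E : α → Type*}
    [∀ i, NormedAddCommGroup (E i)] (hp : 0 < p.toReal) (z : WithLp p (lp E p × Y)) (i : α)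
    (c : E i) :
    ‖z - toLp p (lp.single p i c, 0)‖ ^ p.toReal
      = ‖z‖ ^ p.toReal - ‖z.fst i‖ ^ p.toReal + ‖z.fst i - c‖ ^ p.toReal := by
  have hfst : (z - toLp p (lp.single p i c, 0)).fst = z.fst - lp.single p i c := rfl
  have hsnd : (z - toLp p (lp.single p i c, 0)).snd = z.snd := sub_zero z.snd
  rw [prod_norm_rpow_eq_add hp, prod_norm_rpow_eq_add hp z, hfst, hsnd,
    lp.norm_sub_single_rpow hp]
  ring

variable {α : Type*} [DecidableEq α]

theorem exists_sign_norm_sub_toLp_single_le (hp : p ≠ ⊤) {y : WithLp p (lp (fun _ : α => ℝ) p × Y)}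
    (hy : ‖y‖ ≤ 1) (i : α) :
    ∃ s : ℝ, (s = 1 ∨ s = -1) ∧ ‖y - toLp p (lp.single p i s, 0)‖ ≤ 2 ^ (1 / p.toReal) := by
  have hp₀ : 0 < p.toReal := ENNReal.toReal_pos (zero_lt_one.trans_le Fact.out).ne' hp
  have hyi : |y.fst i| ≤ 1 :=
    (lp.norm_apply_le_norm (zero_lt_one.trans_le Fact.out).ne' y.fst i).trans
      ((WithLp.norm_fst_le _ y).trans hy)
  obtain ⟨s, hs, hys⟩ : ∃ s : ℝ, (s = 1 ∨ s = -1) ∧ |y.fst i - s| ≤ 1 := by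
    rcases le_total 0 (y.fst i) with h | h
    · exact ⟨1, Or.inl rfl, by rw [abs_le] at hyi ⊢; constructor <;> linarith⟩
    · exact ⟨-1, Or.inr rfl, by rw [abs_le] at hyi ⊢; constructor <;> linarith⟩
  refine ⟨s, hs, ?_⟩
  rw [one_div, Real.le_rpow_inv_iff_of_pos (norm_nonneg _) zero_le_two hp₀,
    norm_sub_toLp_single_rpow hp₀]
  have h1 : ‖y‖ ^ p.toReal ≤ 1 := Real.rpow_le_one (norm_nonneg _) hy hp₀.le
  have h2 : ‖y.fst i - s‖ ^ p.toReal ≤ 1 := Real.rpow_le_one (norm_nonneg _) hys hp₀.le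
  have h3 : 0 ≤ ‖y.fst i‖ ^ p.toReal := by positivity
  linarith

theorem tendsto_norm_toLp_single_sub (hp : p ≠ ⊤) {x : WithLp p (lp (fun _ : α => ℝ) p × Y)}
    (hx : ‖x‖ = 1) :
    Tendsto (fun i => ‖toLp p (lp.single p i 1, 0) - x‖) cofinite (𝓝 (2 ^ (1 / p.toReal))) := by
  have hp₀ : 0 < p.toReal := ENNReal.toReal_pos (zero_lt_one.trans_le Fact.out).ne' hp
  have hdist : ∀ i, ‖toLp p (lp.single p i 1, 0) - x‖
      = (1 - ‖x.fst i‖ ^ p.toReal + ‖x.fst i - 1‖ ^ p.toReal) ^ (1 / p.toReal) := by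
    intro i
    rw [norm_sub_rev, ← Real.rpow_rpow_inv (norm_nonneg (x - _)) hp₀.ne',
      norm_sub_toLp_single_rpow hp₀, hx, Real.one_rpow, one_div]
  have hg : Continuous fun t : ℝ => (1 - ‖t‖ ^ p.toReal + ‖t - 1‖ ^ p.toReal) ^ (1 / p.toReal) := by
    fun_prop (disch := positivity)
  have hx0 : Tendsto (fun i => x.fst i) cofinite (𝓝 0) :=
    tendsto_zero_iff_norm_tendsto_zero.2 (lp.tendsto_norm_apply_cofinite_zero hp x.fst)
  have hg0 : (1 - ‖(0 : ℝ)‖ ^ p.toReal + ‖(0 : ℝ) - 1‖ ^ p.toReal) ^ (1 / p.toReal)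
      = 2 ^ (1 / p.toReal) := by
    norm_num [Real.zero_rpow hp₀.ne']
  rw [funext hdist, ← hg0]
  exact (hg.tendsto 0).comp hx0

end LpSum

theorem thickness_lp_sum_p_general
    (p : ℝ≥0∞) [Fact (1 ≤ p)] (hp : p ≠ ⊤)
    (Y : Type*) [NormedAddCommGroup Y] :
    thickness (WithLp p (lp (fun _ : ℕ => ℝ) p × Y)) = 2 ^ (1 / p.toReal) := by
  classical
  have hp₀ : 0 < p := zero_lt_one.trans_le Fact.out
  let e : ℝ → WithLp p (lp (fun _ : ℕ => ℝ) p × Y) := fun s => toLp p (lp.single p 0 s, 0)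
  have hcover : IsUnitCenteredCover {e 1, e (-1)} (2 ^ (1 / p.toReal)) := by
    refine ⟨by simp [e, lp.norm_single hp₀], fun y hy => ?_⟩
    obtain ⟨s, rfl | rfl, hs⟩ := exists_sign_norm_sub_toLp_single_le hp hy 0
    exacts [⟨e 1, by simp, hs⟩, ⟨e (-1), by simp, hs⟩]
  exact thickness_eq_of_tendsto (by positivity) hcover
    (fun n => by simp [lp.norm_single hp₀]) fun x hx => tendsto_norm_toLp_single_sub hp hx

/-- `T(ℓ_p ⊕_p Y) = 2^{1/p}` for `1 ≤ p < ∞` and any nonzero Banach space `Y`. -/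
theorem thickness_lp_sum_p
    (p : ℝ≥0∞) [Fact (1 ≤ p)] (hp : p ≠ ⊤)
    (Y : Type*) [NormedAddCommGroup Y] [NormedSpace ℝ Y] [CompleteSpace Y] [Nontrivial Y] :
    thickness (WithLp p (lp (fun _ : ℕ => ℝ) p × Y)) = 2 ^ (1 / p.toReal) :=
  thickness_lp_sum_p_general p hp Y
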